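/- Let Hypothesis (NL) hold, let $\Omega = \overline{\Omega^{\circ}}$, let the family of quadrature rules $(Q_n)_{n\in\mathbb{N}}$ have eventually positive weights (there is $n_1$ such that all weights of $Q_n$ are positive for $n \ge n_1$) and satisfy the net condition. Suppose $K(x,\eta)$ is $Y_+$-positive for all $x \in \Omega$, $\eta \in \Omega_n$, $n \in \mathbb{N}$, and there exists $\bar x \in \Omega$ such that $K(\bar x, \eta)$ is $Y_+$-injective for all $\eta \in \Omega_n$, $n \in \mathbb{N}$. Then for every $u \in C(\Omega)^d_+ \setminus \{0\}$ there exists $N \in \mathbb{N}$ such that $\mathscr{K}^n u \in C(\Omega)^d_+ \setminus \{0\}$ for all $n \ge N$, where $\mathscr{K}^n u := \sum_{j=0}^{q_n} w_j K(\cdot,\eta_j)u(\eta_j)$. -/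

import Mathlib

/-!
The quadrature sum is a sum of cone elements with nonnegative weights, hence lies in the cone.
For nonvanishing, `u` is nonzero on a ball around some point, and the net condition eventually
puts a node in that ball. At `x̄` the corresponding term is then nonzero by injectivity, and since
`Y₊ ∩ (-Y₊) = {0}`, a sum of elements of `Y₊` vanishes only if every summand does.
-/

open Filter

def IsOrderCone {E : Type*} [AddCommGroup E] [Module ℝ E] [TopologicalSpace E]
    (C : Set E) : Prop :=
  C.Nonempty ∧ IsClosed C ∧ Convex ℝ C ∧
    (∀ t : ℝ, 0 ≤ t → ∀ x ∈ C, t • x ∈ C) ∧ C ∩ (-C) = {0}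

namespace IsOrderCone

variable {E : Type*} [AddCommGroup E] [Module ℝ E] [TopologicalSpace E] {C : Set E}

theorem smul_mem (hC : IsOrderCone C) {t : ℝ} (ht : 0 ≤ t) {x : E} (hx : x ∈ C) : t • x ∈ C :=
  hC.2.2.2.1 t ht x hx

theorem zero_mem (hC : IsOrderCone C) : (0 : E) ∈ C := by
  obtain ⟨x, hx⟩ := hC.1
  simpa using hC.smul_mem le_rfl hx

theorem add_mem (hC : IsOrderCone C) {x y : E} (hx : x ∈ C) (hy : y ∈ C) : x + y ∈ C := by
  have hmid := hC.2.2.1 hx hy (by norm_num : (0 : ℝ) ≤ 1 / 2) (by norm_num : (0 : ℝ) ≤ 1 / 2)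
    (by norm_num)
  have h2 : (2 : ℝ) • ((1 / 2 : ℝ) • x + (1 / 2 : ℝ) • y) = x + y := by
    rw [smul_add, smul_smul, smul_smul]; norm_num
  simpa only [h2] using hC.smul_mem zero_le_two hmid

theorem sum_mem (hC : IsOrderCone C) {ι : Type*} (s : Finset ι) {f : ι → E}
    (hf : ∀ i ∈ s, f i ∈ C) : ∑ i ∈ s, f i ∈ C :=
  Finset.sum_induction f (· ∈ C) (fun _ _ => hC.add_mem) hC.zero_mem hf

theorem eq_zero_of_add_eq_zero (hC : IsOrderCone C) {x y : E} (hx : x ∈ C) (hy : y ∈ C)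
    (h : x + y = 0) : x = 0 := by
  have hxneg : x ∈ -C := by
    rw [eq_neg_of_add_eq_zero_left h]
    exact Set.neg_mem_neg.mpr hy
  have hx0 : x ∈ C ∩ -C := ⟨hx, hxneg⟩
  rwa [hC.2.2.2.2, Set.mem_singleton_iff] at hx0

theorem eq_zero_of_sum_eq_zero (hC : IsOrderCone C) {ι : Type*} [DecidableEq ι] {s : Finset ι}
    {f : ι → E} (hf : ∀ i ∈ s, f i ∈ C) (hsum : ∑ i ∈ s, f i = 0) {i : ι} (hi : i ∈ s) :
    f i = 0 := by
  rw [← Finset.add_sum_erase s f hi] at hsum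
  exact hC.eq_zero_of_add_eq_zero (hf i hi)
    (hC.sum_mem _ fun j hj => hf j (Finset.mem_of_mem_erase hj)) hsum

variable {ι : Type*} [Fintype ι] {w : ι → ℝ} {f : ι → E}

theorem sum_smul_mem (hC : IsOrderCone C) (hw : ∀ j, 0 ≤ w j) (hf : ∀ j, f j ∈ C) :
    ∑ j, w j • f j ∈ C :=
  hC.sum_mem _ fun j _ => hC.smul_mem (hw j) (hf j)

theorem sum_smul_ne_zero (hC : IsOrderCone C) (hw : ∀ j, 0 < w j) (hf : ∀ j, f j ∈ C)
    {j₀ : ι} (hj₀ : f j₀ ≠ 0) : ∑ j, w j • f j ≠ 0 := by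
  classical
  intro hsum
  refine smul_ne_zero (hw j₀).ne' hj₀ ?_
  exact hC.eq_zero_of_sum_eq_zero (fun j _ => hC.smul_mem (hw j).le (hf j)) hsum
    (Finset.mem_univ j₀)

end IsOrderCone

theorem eventually_exists_node_ne_zero {X E : Type*} [PseudoMetricSpace X] [TopologicalSpace E]
    [T1Space E] [Zero E] {u : X → E} (hu : Continuous u) (hne : u ≠ 0) {ι : ℕ → Type*}
    (η : ∀ n, ι n → X) (hnet : ∀ ε > (0 : ℝ), ∃ n₀ : ℕ, ∀ n ≥ n₀, ∀ x, ∃ j, dist x (η n j) < ε) :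
    ∀ᶠ n in atTop, ∃ j, u (η n j) ≠ 0 := by
  obtain ⟨x₀, hx₀⟩ := Function.ne_iff.mp hne
  obtain ⟨ε, hε, hball⟩ :=
    Metric.eventually_nhds_iff.mp (hu.continuousAt.eventually_ne (x := x₀) hx₀)
  obtain ⟨n₀, hn₀⟩ := hnet ε hε
  filter_upwards [eventually_ge_atTop n₀] with n hn
  obtain ⟨j, hj⟩ := hn₀ n hn x₀
  exact ⟨j, hball (by rwa [dist_comm])⟩

theorem stmt12_general {d κ : ℕ} (Ω : Set (EuclideanSpace ℝ (Fin κ)))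
    (Y : Set (EuclideanSpace ℝ (Fin d))) (hY : IsOrderCone Y)
    (K : Ω → Ω → EuclideanSpace ℝ (Fin d) →L[ℝ] EuclideanSpace ℝ (Fin d))
    (q : ℕ → ℕ) (η : ∀ n : ℕ, Fin (q n + 1) → Ω) (w : ∀ n : ℕ, Fin (q n + 1) → ℝ)
    (hwpos : ∃ n₁ : ℕ, ∀ n ≥ n₁, ∀ j, 0 < w n j)
    (hnet : ∀ ε > (0 : ℝ), ∃ n₀ : ℕ, ∀ n ≥ n₀, ∀ x : Ω, ∃ j, dist x (η n j) < ε)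
    (hKpos : ∀ (x : Ω) (n : ℕ) (j : Fin (q n + 1)), ∀ v ∈ Y, K x (η n j) v ∈ Y)
    (hKinj : ∃ xb : Ω, ∀ (n : ℕ) (j : Fin (q n + 1)),
      ∀ v ∈ Y, K xb (η n j) v = 0 → v = 0)
    (u : C(Ω, EuclideanSpace ℝ (Fin d))) (hu : ∀ x, u x ∈ Y) (hune : u ≠ 0) :
    ∃ N : ℕ, ∀ n ≥ N,
      (∀ x : Ω, (∑ j, w n j • K x (η n j) (u (η n j))) ∈ Y) ∧
      (fun x : Ω => ∑ j, w n j • K x (η n j) (u (η n j))) ≠ 0 := by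
  obtain ⟨n₁, hn₁⟩ := hwpos
  obtain ⟨xb, hxb⟩ := hKinj
  have hnode := eventually_exists_node_ne_zero u.continuous
    (DFunLike.coe_injective.ne hune) η hnet
  obtain ⟨N, hN⟩ := eventually_atTop.mp ((eventually_ge_atTop n₁).and hnode)
  refine ⟨N, fun n hn => ?_⟩
  obtain ⟨hn₁n, j₀, hj₀⟩ := hN n hn
  have hterm : ∀ x j, K x (η n j) (u (η n j)) ∈ Y := fun x j => hKpos x n j _ (hu _)
  refine ⟨fun x => hY.sum_smul_mem (fun j => (hn₁ n hn₁n j).le) (hterm x), fun h => ?_⟩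
  exact hY.sum_smul_ne_zero (hn₁ n hn₁n) (hterm xb)
    (fun h0 => hj₀ (hxb n j₀ _ (hu _) h0)) (congrFun h xb)

/-- Under Hypothesis (NL), with `Ω = closure Ω°`, quadrature rules with eventually
positive weights satisfying the net condition, a `Y₊`-positive kernel and some `x̄` at
which the kernel is `Y₊`-injective at all nodes: for every `u ∈ C(Ω)^d₊ \ {0}` there is
`N` such that `𝒦ⁿ u ∈ C(Ω)^d₊ \ {0}` for all `n ≥ N`. -/
theorem stmt12 {d κ : ℕ} (Ω : Set (EuclideanSpace ℝ (Fin κ))) (hΩ : IsCompact Ω)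
    (hΩreg : Ω = closure (interior Ω))
    (Y : Set (EuclideanSpace ℝ (Fin d))) (hY : IsOrderCone Y)
    (K : Ω → Ω → EuclideanSpace ℝ (Fin d) →L[ℝ] EuclideanSpace ℝ (Fin d))
    (hKcont : ∀ y, Continuous fun x => K x y)
    (q : ℕ → ℕ) (η : ∀ n : ℕ, Fin (q n + 1) → Ω) (w : ∀ n : ℕ, Fin (q n + 1) → ℝ)
    (hwpos : ∃ n₁ : ℕ, ∀ n ≥ n₁, ∀ j, 0 < w n j)
    (hnet : ∀ ε > (0 : ℝ), ∃ n₀ : ℕ, ∀ n ≥ n₀, ∀ x : Ω, ∃ j, dist x (η n j) < ε)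
    (hKpos : ∀ (x : Ω) (n : ℕ) (j : Fin (q n + 1)), ∀ v ∈ Y, K x (η n j) v ∈ Y)
    (hKinj : ∃ xb : Ω, ∀ (n : ℕ) (j : Fin (q n + 1)),
      ∀ v ∈ Y, K xb (η n j) v = 0 → v = 0)
    (u : C(Ω, EuclideanSpace ℝ (Fin d))) (hu : ∀ x, u x ∈ Y) (hune : u ≠ 0) :
    ∃ N : ℕ, ∀ n ≥ N,
      (∀ x : Ω, (∑ j, w n j • K x (η n j) (u (η n j))) ∈ Y) ∧
      (fun x : Ω => ∑ j, w n j • K x (η n j) (u (η n j))) ≠ 0 :=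
  stmt12_general Ω Y hY K q η w hwpos hnet hKpos hKinj u hu hune
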